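/- In a Grothendieck topos, let A be a connected object and let X be an object split by A, i.e. there exist a set S and an isomorphism A ⨯ X ≅ A ⨯ γ*(S) commuting with the projections to A. Then the canonical morphism ∐_{f ∈ Hom(A, X)} A ⟶ A ⨯ X, whose f-component is the pairing ⟨𝟙 A, f⟩, is an isomorphism. -/

import Mathlib

/-!
Formalisation of a statement from "On the profinite fundamental group of a
connected Grothendieck topos" (Berger–Iwaniack).  A Grothendieck topos is
modelled as `Sheaf J (Type u)` for a small site `(C, J)`.
-/

open CategoryTheory CategoryTheory.Limits

universe u

attribute [instance high] Sheaf.instHasColimitsOfShape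

/-- A subobject `s` of `X` is complemented if it has a complement in the
subobject lattice of `X`. -/
def IsComplementedSub {C : Type u} [SmallCategory C] {J : GrothendieckTopology C}
    {X : Sheaf J (Type u)} (s : Subobject X) : Prop :=
  ∃ t : Subobject X, s ⊓ t = ⊥ ∧ s ⊔ t = ⊤

/-- An object is decidable if its diagonal, regarded as a subobject of `X ⨯ X`,
is complemented. -/
def IsDecidableObj {C : Type u} [SmallCategory C] {J : GrothendieckTopology C}
    (X : Sheaf J (Type u)) : Prop :=
  IsComplementedSub (Subobject.mk (diag X))

/-- An object is connected if it is not initial and its only complemented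
subobjects are `⊥` and `⊤`. -/
def IsConnectedObj {C : Type u} [SmallCategory C] {J : GrothendieckTopology C}
    (X : Sheaf J (Type u)) : Prop :=
  (¬ Nonempty (IsInitial X)) ∧
    ∀ s : Subobject X, IsComplementedSub s → s = ⊥ ∨ s = ⊤

/-- An object is locally connected if it is (isomorphic to) a coproduct of
connected objects. -/
def IsLocallyConnectedObj {C : Type u} [SmallCategory C] {J : GrothendieckTopology C}
    (X : Sheaf J (Type u)) : Prop :=
  ∃ (I : Type u) (Z : I → Sheaf J (Type u)),
    (∀ i, IsConnectedObj (Z i)) ∧ Nonempty (X ≅ ∐ Z)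

/-- An object is locally constant if it is trivialised, with constant fibres,
by some cover of the terminal object. -/
def IsLocallyConstantObj {C : Type u} [SmallCategory C] {J : GrothendieckTopology C}
    (X : Sheaf J (Type u)) : Prop :=
  ∃ (I : Type u) (U : I → Sheaf J (Type u)),
    Epi (terminal.from (∐ U)) ∧
    ∀ i, ∃ (S : Type u)
      (e : X ⨯ U i ≅ (constantSheaf J (Type u)).obj S ⨯ U i),
      e.hom ≫ Limits.prod.snd = Limits.prod.snd

/-- An object is locally finite if it is trivialised, with finite constant
fibres, by some cover of the terminal object. -/
def IsLocallyFiniteObj {C : Type u} [SmallCategory C] {J : GrothendieckTopology C}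
    (X : Sheaf J (Type u)) : Prop :=
  ∃ (I : Type u) (U : I → Sheaf J (Type u)),
    Epi (terminal.from (∐ U)) ∧
    ∀ i, ∃ (n : ℕ)
      (e : X ⨯ U i ≅ (constantSheaf J (Type u)).obj (ULift.{u} (Fin n)) ⨯ U i),
      e.hom ≫ Limits.prod.snd = Limits.prod.snd

/-- An object is finite if it is locally finite and a finite coproduct of
connected objects. -/
def IsFiniteObj {C : Type u} [SmallCategory C] {J : GrothendieckTopology C}
    (X : Sheaf J (Type u)) : Prop :=
  IsLocallyFiniteObj X ∧
    ∃ (n : ℕ) (Z : Fin n → Sheaf J (Type u)),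
      (∀ k, IsConnectedObj (Z k)) ∧ Nonempty (X ≅ ∐ Z)

/-- An object is a sum of finite objects if it is isomorphic to a coproduct of
finite objects. -/
def IsSumOfFiniteObj {C : Type u} [SmallCategory C] {J : GrothendieckTopology C}
    (X : Sheaf J (Type u)) : Prop :=
  ∃ (I : Type u) (Z : I → Sheaf J (Type u)),
    (∀ i, IsFiniteObj (Z i)) ∧ Nonempty (X ≅ ∐ Z)

/-- A Galois object: a connected, globally supported object `A` such that the
canonical morphism `∐_{g ∈ Aut A} A ⟶ A ⨯ A` is an isomorphism. -/
def IsGaloisObj {C : Type u} [SmallCategory C] {J : GrothendieckTopology C}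
    (A : Sheaf J (Type u)) : Prop :=
  IsConnectedObj A ∧ Epi (terminal.from A) ∧
    IsIso (Sigma.desc (f := fun _ : Aut A => A)
      (fun g => Limits.prod.lift (𝟙 A) g.hom))

/-!
The constant sheaf functor `γ*` preserves coproducts and the terminal object, so `γ*(S)` is the
coproduct of `S` copies of `1`; coproducts in a sheaf topos are universal, hence
`A ⨯ γ*(S) ≅ ∐_{s ∈ S} A` with components `⟨𝟙 A, s⟩`. For connected `A` the map
`S → Hom(A, γ*(S))` is bijective: distinct summands of a coproduct are disjoint and `A` is not
initial, and a morphism from `A` into a coproduct factors through a summand, since `A` is the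
coproduct of the pullbacks of the summands, each of which is a complemented subobject of `A`.
A splitting `A ⨯ X ≅ A ⨯ γ*(S)` over `A` identifies `Hom(A, X)` with `Hom(A, γ*(S))`, and under
these bijections the canonical morphism becomes the isomorphism `∐_{s ∈ S} A ≅ A ⨯ X`.
-/

namespace CategoryTheory

variable {D : Type*} [Category* D]

theorem Subobject.eq_bot_iff_nonempty_isInitial [HasInitial D] [InitialMonoClass D] {B : D}
    (P : Subobject B) : P = ⊥ ↔ Nonempty (IsInitial (P : D)) := by
  refine ⟨?_, fun ⟨hP⟩ => le_bot_iff.mp ?_⟩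
  · rintro rfl
    exact ⟨initialIsInitial.ofIso Subobject.botCoeIsoInitial.symm⟩
  · rw [Subobject.bot_eq_initial_to]
    exact Subobject.le_mk_of_comm (hP.to _) (hP.hom_ext _ _)

theorem Subobject.mk_sup_mk_eq_top_of_isColimit [HasImages D] [HasBinaryCoproducts D]
    {X Y W : D} {inl : X ⟶ W} {inr : Y ⟶ W} (hc : IsColimit (BinaryCofan.mk inl inr))
    [Mono inl] [Mono inr] : Subobject.mk inl ⊔ Subobject.mk inr = ⊤ := by
  set P := Subobject.mk inl ⊔ Subobject.mk inr
  have hl : P.Factors inl := Subobject.sup_factors_of_factors_left (Subobject.mk_factors_self _)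
  have hr : P.Factors inr := Subobject.sup_factors_of_factors_right (Subobject.mk_factors_self _)
  let l : W ⟶ (P : D) :=
    (BinaryCofan.IsColimit.desc' hc (P.factorThru _ hl) (P.factorThru _ hr)).1
  have hll : inl ≫ l = P.factorThru _ hl := (BinaryCofan.IsColimit.desc' hc _ _).2.1
  have hlr : inr ≫ l = P.factorThru _ hr := (BinaryCofan.IsColimit.desc' hc _ _).2.2
  refine top_le_iff.mp ?_
  rw [Subobject.top_eq_id]
  refine Subobject.mk_le_of_comm l (BinaryCofan.IsColimit.hom_ext hc ?_ ?_)
  · change inl ≫ l ≫ P.arrow = inl ≫ 𝟙 W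
    rw [reassoc_of% hll, Subobject.factorThru_arrow, Category.comp_id]
  · change inr ≫ l ≫ P.arrow = inr ≫ 𝟙 W
    rw [reassoc_of% hlr, Subobject.factorThru_arrow, Category.comp_id]

theorem Subobject.mk_inf_mk_eq_bot_of_isColimit [FinitaryExtensive D] [HasPullbacks D]
    {X Y W : D} {inl : X ⟶ W} {inr : Y ⟶ W} (hc : IsColimit (BinaryCofan.mk inl inr))
    [Mono inl] [Mono inr] : Subobject.mk inl ⊓ Subobject.mk inr = ⊥ := by
  set P := Subobject.mk inl ⊓ Subobject.mk inr
  have hP : IsPullback (initial.to X) (initial.to Y) inl inr :=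
    FinitaryExtensive.isPullback_initial_to_binaryCofan hc
  refine (Subobject.eq_bot_iff_nonempty_isInitial P).mpr ⟨IsInitial.ofStrict
    (hP.lift (P.ofLEMk inl _root_.inf_le_left) (P.ofLEMk inr _root_.inf_le_right) ?_)
    initialIsInitial⟩
  rw [Subobject.ofLEMk_comp, Subobject.ofLEMk_comp]

theorem IsPullback.prodLift_id_of_isTerminal {A Y T : D} [HasBinaryProduct A Y]
    (hT : IsTerminal T) (g : T ⟶ Y) :
    IsPullback (prod.lift (𝟙 A) (hT.from A ≫ g)) (hT.from A) prod.snd g := by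
  refine .mk' (prod.lift_snd _ _) (fun W φ φ' h _ => ?_)
    (fun W a b w => ⟨a ≫ prod.fst, prod.hom_ext ?_ ?_, hT.hom_ext _ _⟩)
  · simpa [prod.lift_fst] using h =≫ prod.fst
  · simp [prod.lift_fst]
  · rw [Category.assoc, prod.lift_snd, w, ← Category.assoc, hT.hom_ext (_ ≫ hT.from A) b]

end CategoryTheory

namespace CategoryTheory.Limits

section

variable {D : Type*} [Category* D]

theorem IsUniversalColimit.nonempty_isInitial_of_pullback {ι : Type*} {Z : ι → D}
    {c : Cofan Z} (hc : IsUniversalColimit c) {A : D} (h : A ⟶ c.pt)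
    [∀ i, HasPullback h (c.inj i)] (H : ∀ i, Nonempty (IsInitial (pullback h (c.inj i)))) :
    Nonempty (IsInitial A) := by
  obtain ⟨hA⟩ := hc (Cofan.mk A fun i => pullback.fst h (c.inj i))
    (Discrete.natTrans fun i => pullback.snd h (c.inj i.as)) h
    (by ext ⟨i⟩; exact pullback.condition.symm) (.of_discrete _)
    fun ⟨i⟩ => IsPullback.of_hasPullback _ _
  exact ⟨IsInitial.ofUniqueHom (fun W => Cofan.IsColimit.desc hA fun i => (H i).some.to W)
    fun _ _ => Cofan.IsColimit.hom_ext hA _ _ fun i => (H i).some.hom_ext _ _⟩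

theorem IsUniversalColimit.isIso_sigmaDesc_prodLift [HasBinaryProducts D] {S : Type*} {T : D}
    (hT : IsTerminal T) {c : Cofan fun _ : S => T} (hc : IsUniversalColimit c) (A : D)
    [HasCoproduct fun _ : S => A] :
    IsIso (Sigma.desc fun s => prod.lift (𝟙 A) (hT.from A ≫ c.inj s)) :=
  (Cofan.nonempty_isColimit_iff_isIso_sigmaDesc
    (Cofan.mk (A ⨯ c.pt) fun s => prod.lift (𝟙 A) (hT.from A ≫ c.inj s))).mp <|
    hc _ (Discrete.natTrans fun _ => hT.from A) prod.snd
      (by ext ⟨s⟩; exact (prod.lift_snd _ _).symm) (.of_discrete _)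
      fun ⟨s⟩ => IsPullback.prodLift_id_of_isTerminal hT (c.inj s)

/-- The splitting `c.pt ≅ Z i ⨿ ∐_{j ≠ i} Z j`, which reduces questions about one summand of an
arbitrary coproduct to binary coproducts. -/
noncomputable def Cofan.isColimitBinaryCofanInjSigmaDesc {ι : Type*} [DecidableEq ι]
    {Z : ι → D} {c : Cofan Z} (hc : IsColimit c) (i : ι)
    [HasCoproduct fun j : {j // j ≠ i} => Z j] :
    IsColimit (BinaryCofan.mk (c.inj i) (Sigma.desc fun j : {j // j ≠ i} => c.inj j)) :=
  BinaryCofan.isColimitMk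
    (fun s => Cofan.IsColimit.desc hc fun j =>
      if h : j = i then eqToHom (congrArg Z h) ≫ s.inl
      else Sigma.ι (fun j : {j // j ≠ i} => Z j) ⟨j, h⟩ ≫ s.inr)
    (fun s => by rw [Cofan.IsColimit.fac, dif_pos rfl, eqToHom_refl]; exact Category.id_comp _)
    (fun s => Sigma.hom_ext _ _ fun ⟨j, hj⟩ => by simp [Cofan.IsColimit.fac, hj])
    (fun s m hl hr => Cofan.IsColimit.hom_ext hc _ _ fun j => by
      by_cases h : j = i
      · subst h
        rw [Cofan.IsColimit.fac, dif_pos rfl, eqToHom_refl]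
        exact hl.trans (Category.id_comp _).symm
      · simp [Cofan.IsColimit.fac, h, ← hr])

theorem BinaryCofan.nonempty_isColimit_of_isPullback [FinitaryExtensive D] {X Y W : D}
    {inl : X ⟶ W} {inr : Y ⟶ W} (hc : IsColimit (BinaryCofan.mk inl inr)) {A P Q : D}
    (h : A ⟶ W) {p : P ⟶ A} {p' : P ⟶ X} {q : Q ⟶ A} {q' : Q ⟶ Y}
    (hp : IsPullback p p' h inl) (hq : IsPullback q q' h inr) :
    Nonempty (IsColimit (BinaryCofan.mk p q)) :=
  ((BinaryCofan.isVanKampen_iff _).mp (FinitaryExtensive.vanKampen _ hc) (BinaryCofan.mk p q)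
    p' q' h hp.w.symm hq.w.symm).mpr ⟨hp, hq⟩

theorem Cofan.nonempty_isInitial_of_comp_inj_eq [FinitaryExtensive D] {ι : Type*} {Z : ι → D}
    {c : Cofan Z} (hc : IsColimit c) {i j : ι} (hij : i ≠ j)
    [HasCoproduct fun k : {k // k ≠ i} => Z k] {W : D} (a : W ⟶ Z i) (b : W ⟶ Z j)
    (w : a ≫ c.inj i = b ≫ c.inj j) : Nonempty (IsInitial W) := by
  classical
  have hP : IsPullback (initial.to _) (initial.to _) (c.inj i)
      (Sigma.desc fun k : {k // k ≠ i} => c.inj k) :=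
    FinitaryExtensive.isPullback_initial_to_binaryCofan
      (Cofan.isColimitBinaryCofanInjSigmaDesc hc i)
  refine ⟨IsInitial.ofStrict (hP.lift a
    (b ≫ Sigma.ι (fun k : {k // k ≠ i} => Z k) ⟨j, hij.symm⟩) ?_) initialIsInitial⟩
  rw [Category.assoc, Sigma.ι_desc, w]

theorem Sigma.isIso_desc_comp_equiv_iff {S T : Type*} (E : S ≃ T) {f : T → D} [HasCoproduct f]
    [HasCoproduct fun s => f (E s)] {Z : D} (g : ∀ t, f t ⟶ Z) :
    IsIso (Sigma.desc fun s => g (E s)) ↔ IsIso (Sigma.desc g) := by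
  have : (Sigma.whiskerEquiv E fun s => Iso.refl (f (E s))).hom ≫ Sigma.desc g =
      Sigma.desc fun s => g (E s) :=
    Sigma.hom_ext _ _ fun s => by simp [Sigma.ι_comp_map'_assoc]
  rw [← this, isIso_comp_left_iff]

theorem prod.lift_id_lift_comp_snd {A X Y : D} [HasBinaryProduct A X] [HasBinaryProduct A Y]
    (φ : A ⨯ X ⟶ A ⨯ Y) (hφ : φ ≫ prod.fst = prod.fst) (f : A ⟶ X) :
    prod.lift (𝟙 A) (prod.lift (𝟙 A) f ≫ φ ≫ prod.snd) = prod.lift (𝟙 A) f ≫ φ :=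
  prod.hom_ext (by simp [hφ, prod.lift_fst]) (by simp [prod.lift_snd])

noncomputable def homEquivOfProdIso {A X Y : D} [HasBinaryProduct A X] [HasBinaryProduct A Y]
    (e : A ⨯ X ≅ A ⨯ Y) (he : e.hom ≫ prod.fst = prod.fst) : (A ⟶ X) ≃ (A ⟶ Y) where
  toFun f := prod.lift (𝟙 A) f ≫ e.hom ≫ prod.snd
  invFun g := prod.lift (𝟙 A) g ≫ e.inv ≫ prod.snd
  left_inv f := by
    dsimp only
    rw [prod.lift_id_lift_comp_snd _ he, Category.assoc, e.hom_inv_id_assoc, prod.lift_snd]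
  right_inv g := by
    dsimp only
    rw [prod.lift_id_lift_comp_snd _ (by rw [Iso.inv_comp_eq, he]), Category.assoc,
      e.inv_hom_id_assoc, prod.lift_snd]

theorem prod.lift_id_homEquivOfProdIso_symm_apply {A X Y : D} [HasBinaryProduct A X]
    [HasBinaryProduct A Y] (e : A ⨯ X ≅ A ⨯ Y) (he : e.hom ≫ prod.fst = prod.fst)
    (g : A ⟶ Y) :
    prod.lift (𝟙 A) ((homEquivOfProdIso e he).symm g) = prod.lift (𝟙 A) g ≫ e.inv :=
  prod.lift_id_lift_comp_snd e.inv (by rw [Iso.inv_comp_eq, he]) g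

end

theorem isUniversalColimit_of_evaluation {K : Type*} [Category* K] {C : Type*} [Category* C]
    {D : Type*} [Category* D] [HasPullbacks D] {F : K ⥤ C ⥤ D}
    (c : Cocone F) (hc : ∀ x : C, IsUniversalColimit (((evaluation C D).obj x).mapCocone c)) :
    IsUniversalColimit c := by
  intro F' c' α f e hα H
  exact ⟨evaluationJointlyReflectsColimits _ fun x =>
    (hc x (((evaluation C D).obj x).mapCocone c') (Functor.whiskerRight α _)
      (((evaluation C D).obj x).map f)
      (by ext y; exact NatTrans.congr_app (NatTrans.congr_app e y) x)
      (hα.whiskerRight _) fun j => (H j).map ((evaluation C D).obj x)).some⟩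

theorem Types.isUniversalColimit_of_discrete {ι : Type u} {F : Discrete ι ⥤ Type u}
    {c : Cocone F} (hc : IsColimit c) : IsUniversalColimit c := by
  intro F' c' α g hg _ hpb
  obtain ⟨X, rfl⟩ : ∃ X : ι → Type u, F = Discrete.functor X :=
    ⟨fun i => F.obj ⟨i⟩,
      Functor.hext (fun _ => rfl) (by rintro ⟨i⟩ ⟨j⟩ ⟨⟨rfl : i = j⟩⟩; simp)⟩
  obtain ⟨Y, rfl⟩ : ∃ Y : ι → Type u, F' = Discrete.functor Y :=
    ⟨fun i => F'.obj ⟨i⟩,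
      Functor.hext (fun _ => rfl) (by rintro ⟨i⟩ ⟨j⟩ ⟨⟨rfl : i = j⟩⟩; simp)⟩
  have hgα (i : ι) (y : Y i) : g (Cofan.inj c' i y) = Cofan.inj c i (α.app ⟨i⟩ y) :=
    (types_congr_hom (congr_app hg ⟨i⟩) y).symm
  refine (Cofan.nonempty_isColimit_iff_bijective_fromSigma c').mpr ⟨?_, fun t => ?_⟩
  · rintro ⟨i, y⟩ ⟨j, z⟩ (h : Cofan.inj c' i y = Cofan.inj c' j z)
    have hα : Cofan.inj c i (α.app ⟨i⟩ y) = Cofan.inj c j (α.app ⟨j⟩ z) := by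
      rw [← hgα, ← hgα, h]
    obtain rfl := Cofan.eq_of_inj_apply_eq_of_isColimit hc _ _ hα
    rw [Types.ext_of_isPullback (hpb ⟨i⟩) h (Cofan.inj_injective_of_isColimit hc i hα)]
  · obtain ⟨i, x, hx⟩ := Cofan.inj_jointly_surjective_of_isColimit hc (g t)
    obtain ⟨y, hy, -⟩ := Types.exists_of_isPullback (hpb ⟨i⟩) t x hx.symm
    exact ⟨⟨i, y⟩, hy⟩

end CategoryTheory.Limits

section

variable {C : Type u} [SmallCategory C] {J : GrothendieckTopology C}

theorem CategoryTheory.Sheaf.isUniversalColimit_of_discrete {ι : Type u}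
    {F : Discrete ι ⥤ Sheaf J (Type u)} {c : Cocone F} (hc : IsColimit c) :
    IsUniversalColimit c := by
  have hpsh : IsUniversalColimit (colimit.cocone (F ⋙ sheafToPresheaf J (Type u))) :=
    isUniversalColimit_of_evaluation _ fun X => Types.isUniversalColimit_of_discrete
      (isColimitOfPreserves ((evaluation Cᵒᵖ (Type u)).obj X) (colimit.isColimit _))
  let adj := sheafificationAdjunction J (Type u)
  have H := (hpsh.map_reflective adj).precompose_isIso
    (F.rightUnitor.inv ≫ Functor.whiskerLeft F (inv adj.counit))
  exact H.of_iso (H.isColimit.uniqueUpToIso hc)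

theorem isComplementedSub_mk_of_isColimit {X Y W : Sheaf J (Type u)} {inl : X ⟶ W}
    {inr : Y ⟶ W} (hc : IsColimit (BinaryCofan.mk inl inr)) [Mono inl] :
    IsComplementedSub (Subobject.mk inl) :=
  have : Mono inr := FinitaryExtensive.mono_inr_of_isColimit hc
  ⟨Subobject.mk inr, Subobject.mk_inf_mk_eq_bot_of_isColimit hc,
    Subobject.mk_sup_mk_eq_top_of_isColimit hc⟩

theorem IsConnectedObj.isIso_inl_of_isColimit {X Y A : Sheaf J (Type u)} (hA : IsConnectedObj A)
    {inl : X ⟶ A} {inr : Y ⟶ A} (hc : IsColimit (BinaryCofan.mk inl inr))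
    (hX : ¬ Nonempty (IsInitial X)) : IsIso inl := by
  have : Mono inl := FinitaryExtensive.mono_inl_of_isColimit hc
  rcases hA.2 _ (isComplementedSub_mk_of_isColimit hc) with h | h
  · obtain ⟨h⟩ := (Subobject.eq_bot_iff_nonempty_isInitial _).mp h
    exact absurd ⟨h.ofIso (Subobject.underlyingIso inl)⟩ hX
  · exact (Subobject.isIso_iff_mk_eq_top _).mpr h

theorem IsConnectedObj.exists_eq_comp_inj {A : Sheaf J (Type u)} (hA : IsConnectedObj A)
    {ι : Type u} {Z : ι → Sheaf J (Type u)} {c : Cofan Z} (hc : IsColimit c) (h : A ⟶ c.pt) :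
    ∃ i, ∃ g : A ⟶ Z i, h = g ≫ c.inj i := by
  classical
  obtain ⟨i, hi⟩ : ∃ i, ¬ Nonempty (IsInitial (pullback h (c.inj i))) := by
    by_contra! H
    exact hA.1 (IsUniversalColimit.nonempty_isInitial_of_pullback
      (Sheaf.isUniversalColimit_of_discrete hc) h H)
  obtain ⟨hpb⟩ := BinaryCofan.nonempty_isColimit_of_isPullback
    (Cofan.isColimitBinaryCofanInjSigmaDesc hc i) h (IsPullback.of_hasPullback h (c.inj i))
    (IsPullback.of_hasPullback h _)
  have := hA.isIso_inl_of_isColimit hpb hi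
  exact ⟨i, inv (pullback.fst h (c.inj i)) ≫ pullback.snd h (c.inj i),
    by simp [pullback.condition]⟩

theorem IsConnectedObj.bijective_from_comp_inj {A : Sheaf J (Type u)} (hA : IsConnectedObj A)
    {S : Type u} {T : Sheaf J (Type u)} (hT : IsTerminal T) {c : Cofan fun _ : S => T}
    (hc : IsColimit c) : Function.Bijective fun s => hT.from A ≫ c.inj s := by
  refine ⟨fun s s' hss' => ?_, fun g => ?_⟩
  · by_contra hne
    exact hA.1 (Cofan.nonempty_isInitial_of_comp_inj_eq hc hne _ _ hss')
  · obtain ⟨s, a, rfl⟩ := hA.exists_eq_comp_inj hc g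
    exact ⟨s, by rw [hT.hom_ext a (hT.from A)]⟩

variable (J) in
noncomputable def isTerminalConstantSheafObjPUnit :
    IsTerminal ((constantSheaf J (Type u)).obj PUnit) :=
  IsTerminal.isTerminalObj (Functor.const Cᵒᵖ ⋙ presheafToSheaf J (Type u)) _
    Types.isTerminalPUnit

variable (J) in
noncomputable def isColimitConstantSheafCofan (S : Type u) :
    IsColimit (Cofan.mk ((constantSheaf J (Type u)).obj S)
      fun s : S => (constantSheaf J (Type u)).map (TypeCat.ofHom fun _ : PUnit => s)) :=
  have : (constantSheaf J (Type u)).IsLeftAdjoint :=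
    ⟨_, ⟨constLimAdj.comp (sheafificationAdjunction J (Type u))⟩⟩
  isColimitCofanMkObjOfIsColimit (constantSheaf J (Type u)) _ _
    (Cofan.IsColimit.mk _ (fun t => TypeCat.ofHom fun s => t.inj s PUnit.unit) (fun _ _ => rfl)
      fun _ _ hm => ConcreteCategory.hom_ext _ _ fun s => types_congr_hom (hm s) PUnit.unit)

end

/-- if a connected object `A` splits `X`, then the splitting may
be identified with the canonical morphism `∐_{f ∈ Hom(A,X)} A ⟶ A ⨯ X`. -/
theorem splitting_canonical_iso
    {C : Type u} [SmallCategory C] {J : GrothendieckTopology C}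
    (A X : Sheaf J (Type u)) (hA : IsConnectedObj A)
    (hsplit : ∃ (S : Type u)
      (e : A ⨯ X ≅ A ⨯ (constantSheaf J (Type u)).obj S),
      e.hom ≫ Limits.prod.fst = Limits.prod.fst) :
    IsIso (Sigma.desc (f := fun _ : (A ⟶ X) => A)
      (fun f => Limits.prod.lift (𝟙 A) f)) := by
  obtain ⟨S, e, he⟩ := hsplit
  have hT := isTerminalConstantSheafObjPUnit J
  have hS := isColimitConstantSheafCofan J S
  let κ : S → (A ⟶ (constantSheaf J (Type u)).obj S) := fun s =>
    hT.from A ≫ (constantSheaf J (Type u)).map (TypeCat.ofHom fun _ => s)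
  let E : S ≃ (A ⟶ X) := (Equiv.ofBijective κ (hA.bijective_from_comp_inj hT hS)).trans
    (homEquivOfProdIso e he).symm
  have hE (s : S) : prod.lift (𝟙 A) (E s) = prod.lift (𝟙 A) (κ s) ≫ e.inv :=
    prod.lift_id_homEquivOfProdIso_symm_apply e he (κ s)
  have : IsIso (Sigma.desc fun s => prod.lift (𝟙 A) (κ s)) :=
    IsUniversalColimit.isIso_sigmaDesc_prodLift hT (Sheaf.isUniversalColimit_of_discrete hS) A
  refine (Sigma.isIso_desc_comp_equiv_iff E _).mp ?_
  rw [show (Sigma.desc fun s => prod.lift (𝟙 A) (E s)) =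
    Sigma.desc (fun s => prod.lift (𝟙 A) (κ s)) ≫ e.inv from
    Sigma.hom_ext _ _ fun s => by rw [Sigma.ι_desc, Sigma.ι_desc_assoc, hE]]
  infer_instance
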